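/- arXiv:0903.0683 — 2 statements merged into one kernel-verified Lean document; each statement's English description precedes it below -/
import Mathlib

section
/- For all 0 < x < 1, L(−x/(1−x)) = −L(x) (Landen's identity for the Rogers L-function). -/
/-!
Landen's identity for the dilogarithm, `Li₂(-x/(1-x)) = -Li₂ x - ½ log²(1-x)`, holds for every
`x < 1`: both sides vanish at `0`, and they have the same derivative because under
`u = -x/(1-x)` one has `1 - u = (1-x)⁻¹`, so that `log(1-u)/u du` becomes
`(log(1-x)/x + log(1-x)/(1-x)) dx`. The logarithmic terms of `L` then recombine through
`log|u| = log|x| - log(1-x)`.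
-/

open Real

noncomputable def Li2 (x : ℝ) : ℝ := -∫ t in (0:ℝ)..x, Real.log (1 - t) / t

noncomputable def rogersL (x : ℝ) : ℝ :=
  Li2 x + (1/2) * Real.log |x| * Real.log (1 - x)

open Set

lemma hasDerivAt_log_one_sub {t : ℝ} (ht : t < 1) :
    HasDerivAt (fun s => log (1 - s)) (-1 / (1 - t)) t := by
  simpa using ((hasDerivAt_id t).const_sub 1).log (sub_ne_zero.2 ht.ne')

/- `dslope (fun s => log (1 - s)) 0` is the integrand `log (1 - t) / t` of `Li2`, extended
continuously by `-1` at `t = 0`, so that the fundamental theorem of calculus applies at `0`. -/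
lemma dslope_log_one_sub_of_ne {t : ℝ} (ht : t ≠ 0) :
    dslope (fun s => log (1 - s)) 0 t = log (1 - t) / t := by
  simp [dslope_of_ne _ ht, slope_def_field]

lemma continuousOn_dslope_log_one_sub :
    ContinuousOn (dslope (fun s => log (1 - s)) 0) (Iio 1) :=
  (continuousOn_dslope (Iio_mem_nhds one_pos)).2
    ⟨fun _ ht => (hasDerivAt_log_one_sub ht).continuousAt.continuousWithinAt,
      (hasDerivAt_log_one_sub one_pos).differentiableAt⟩

lemma Li2_eq_neg_integral_dslope (x : ℝ) :
    Li2 x = -∫ t in (0:ℝ)..x, dslope (fun s => log (1 - s)) 0 t := by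
  rw [Li2, neg_inj]
  refine intervalIntegral.integral_congr_ae ?_
  filter_upwards [MeasureTheory.Measure.ae_ne _ 0] with t ht _
  rw [dslope_log_one_sub_of_ne ht]

lemma hasDerivAt_Li2 {x : ℝ} (hx : x < 1) :
    HasDerivAt Li2 (-dslope (fun s => log (1 - s)) 0 x) x := by
  have hcont := continuousOn_dslope_log_one_sub
  have hint : IntervalIntegrable (dslope (fun s => log (1 - s)) 0) MeasureTheory.volume 0 x :=
    (hcont.mono fun _ ht => ht.2.trans_lt (max_lt one_pos hx)).intervalIntegrable
  rw [funext Li2_eq_neg_integral_dslope]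
  exact (intervalIntegral.integral_hasDerivAt_right hint
    (hcont.stronglyMeasurableAtFilter isOpen_Iio x hx) (hcont.continuousAt (Iio_mem_nhds hx))).neg

lemma one_sub_neg_div_one_sub {K : Type*} [Field K] {y : K} (hy : 1 - y ≠ 0) :
    1 - -y / (1 - y) = (1 - y)⁻¹ := by
  field_simp
  ring

lemma dslope_log_one_sub_landen {y : ℝ} (hy : y < 1) :
    dslope (fun s => log (1 - s)) 0 (-y / (1 - y)) / (1 - y) ^ 2 =
      dslope (fun s => log (1 - s)) 0 y + log (1 - y) / (1 - y) := by
  rcases eq_or_ne y 0 with rfl | hy0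
  · simp
  have h1y : 1 - y ≠ 0 := sub_ne_zero.2 hy.ne'
  rw [dslope_log_one_sub_of_ne hy0, dslope_log_one_sub_of_ne (div_ne_zero (neg_ne_zero.2 hy0) h1y),
    one_sub_neg_div_one_sub h1y, log_inv]
  field_simp
  ring

lemma Li2_landen {x : ℝ} (hx : x < 1) :
    Li2 (-x / (1 - x)) = -Li2 x - (1 / 2) * log (1 - x) ^ 2 := by
  set F : ℝ → ℝ := fun y => Li2 (-y / (1 - y)) + Li2 y + (1 / 2) * log (1 - y) ^ 2
  have hF : ∀ y ∈ Iio (1 : ℝ), HasDerivAt F 0 y := by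
    intro y (hy : y < 1)
    have h1y : 1 - y ≠ 0 := sub_ne_zero.2 hy.ne'
    have hu : HasDerivAt (fun s => -s / (1 - s)) (-1 / (1 - y) ^ 2) y := by
      refine ((hasDerivAt_neg y).div ((hasDerivAt_id' y).const_sub 1) h1y).congr_deriv ?_
      field_simp
      ring
    have hu1 : -y / (1 - y) < 1 := by
      rw [div_lt_one (by linarith)]
      linarith
    have hF' : HasDerivAt F _ y := (((hasDerivAt_Li2 hu1).comp y hu).add (hasDerivAt_Li2 hy)).add
      (((hasDerivAt_log_one_sub hy).pow 2).const_mul (1 / 2))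
    refine hF'.congr_deriv ?_
    linear_combination dslope_log_one_sub_landen hy
  have hconst := isOpen_Iio.is_const_of_deriv_eq_zero isPreconnected_Iio
    (fun y hy => (hF y hy).differentiableAt.differentiableWithinAt)
    (fun y hy => (hF y hy).deriv) hx (show (0 : ℝ) < 1 from one_pos)
  have hF0 : F 0 = 0 := by simp [F, Li2]
  simp only [F, hF0] at hconst
  linarith

theorem rogersL_landen_general (x : ℝ) (h2 : x < 1) :
    rogersL (-x / (1 - x)) = -rogersL x := by
  rcases eq_or_ne x 0 with rfl | hx0
  · simp [rogersL, Li2]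
  have h1x : 0 < 1 - x := sub_pos.2 h2
  have hlog_abs : log |-x / (1 - x)| = log |x| - log (1 - x) := by
    rw [abs_div, abs_neg, abs_of_pos h1x, log_div (abs_ne_zero.2 hx0) h1x.ne']
  rw [rogersL, rogersL, Li2_landen h2, one_sub_neg_div_one_sub h1x.ne', log_inv, hlog_abs]
  ring

theorem rogersL_landen (x : ℝ) (h1 : 0 < x) (h2 : x < 1) :
    rogersL (-x / (1 - x)) = -rogersL x :=
  rogersL_landen_general x h2
end

section
/- 6·L(1/3) + 3·L(1/4) = π²/2, where L is the Rogers L-function. -/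
/-!
`Li2` is the primitive of the continuous function `-log (1 - t) / t`, so functional equations for
it follow by differentiating and checking one value: Landen's
`Li2 x + Li2 (x / (x - 1)) = -½ log² (1 - x)`, the duplication
`Li2 (x²) = 2 Li2 x + 2 Li2 (-x)`, and Euler's reflection
`Li2 x + Li2 (1 - x) + log x log (1 - x) = Li2 1 = ζ(2)`, whose constant is found by letting
`x → 0⁺` and integrating the power series of the integrand termwise.
Landen at `1/3` and duplication at `1/2` turn `6 L(1/3) + 3 L(1/4)` into `6 Li2 (1/2)` plus
logarithms (the two `Li2 (-1/2)` terms cancel), and reflection at `1/2` evaluates it.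
-/

open Real

open MeasureTheory Set Filter Topology

theorem IsOpen.is_const_of_hasDerivAt_zero {f : ℝ → ℝ} {s : Set ℝ} (hs : IsOpen s)
    (hs' : IsPreconnected s) (hf : ∀ x ∈ s, HasDerivAt f 0 x) {x y : ℝ} (hx : x ∈ s)
    (hy : y ∈ s) : f x = f y :=
  hs.is_const_of_deriv_eq_zero hs' (fun z hz => (hf z hz).differentiableAt.differentiableWithinAt)
    (fun z hz => (hf z hz).deriv) hx hy

/-- The integrand `-log (1 - t) / t` of `Li2`, extended continuously to `t = 0`. -/
noncomputable def li2Integrand : ℝ → ℝ := dslope (fun t => -log (1 - t)) 0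

theorem li2Integrand_of_ne_zero {t : ℝ} (ht : t ≠ 0) :
    li2Integrand t = -log (1 - t) / t := by
  simp [li2Integrand, dslope_of_ne _ ht, slope_def_field]

theorem continuousOn_li2Integrand : ContinuousOn li2Integrand (Iio 1) := by
  have hd : ∀ x ∈ Iio (1 : ℝ), DifferentiableAt ℝ (fun t => -log (1 - t)) x := fun x hx =>
    ((differentiableAt_id.const_sub 1).log (sub_pos.2 hx).ne').neg
  exact (continuousOn_dslope (Iio_mem_nhds one_pos)).2
    ⟨fun x hx => (hd x hx).continuousAt.continuousWithinAt, hd 0 (by norm_num)⟩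

theorem Li2_eq_integral_li2Integrand (x : ℝ) : Li2 x = ∫ t in 0..x, li2Integrand t := by
  rw [Li2, ← intervalIntegral.integral_neg]
  refine intervalIntegral.integral_congr_ae ?_
  filter_upwards [compl_mem_ae_iff.2 (measure_singleton (0 : ℝ))] with t (ht : t ≠ 0) _
  rw [li2Integrand_of_ne_zero ht, neg_div]

theorem hasDerivAt_Li2_s9 {x : ℝ} (hx : x < 1) : HasDerivAt Li2 (li2Integrand x) x := by
  rw [funext Li2_eq_integral_li2Integrand]
  have hsub : uIcc 0 x ⊆ Iio 1 := fun t ht => ht.2.trans_lt (max_lt one_pos hx)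
  exact intervalIntegral.integral_hasDerivAt_right
    ((continuousOn_li2Integrand.mono hsub).intervalIntegrable)
    (continuousOn_li2Integrand.stronglyMeasurableAtFilter isOpen_Iio x hx)
    (continuousOn_li2Integrand.continuousAt (Iio_mem_nhds hx))

@[simp] theorem Li2_zero : Li2 0 = 0 := by simp [Li2]

theorem Li2_add_Li2_div_sub_one {x : ℝ} (hx : x < 1) :
    Li2 x + Li2 (x / (x - 1)) = -(1 / 2) * log (1 - x) ^ 2 := by
  set F : ℝ → ℝ := fun x => Li2 x + Li2 (x / (x - 1)) + (1 / 2) * log (1 - x) ^ 2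
  suffices F x = F 0 by simp [F] at this; linarith
  refine isOpen_Iio.is_const_of_hasDerivAt_zero isPreconnected_Iio (fun y (hy : y < 1) => ?_)
    hx (by norm_num : (0 : ℝ) < 1)
  have hy1 : y - 1 ≠ 0 := sub_ne_zero.2 hy.ne
  have hy1' : 1 - y ≠ 0 := sub_ne_zero.2 hy.ne'
  have hu : y / (y - 1) < 1 := by
    rw [div_lt_one_of_neg (sub_neg.2 hy)]; linarith
  have hF := ((hasDerivAt_Li2_s9 hy).add ((hasDerivAt_Li2_s9 hu).comp y
    ((hasDerivAt_id y).div ((hasDerivAt_id y).sub_const 1) hy1))).add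
    ((((hasDerivAt_id y).const_sub 1).log hy1').pow 2 |>.const_mul (1 / 2))
  refine hF.congr_deriv ?_
  rcases eq_or_ne y 0 with rfl | hy0
  · simp
  have hlog : log (1 - y / (y - 1)) = -log (1 - y) := by
    rw [← log_inv]; congr 1; field_simp; ring
  rw [li2Integrand_of_ne_zero hy0, li2Integrand_of_ne_zero (div_ne_zero hy0 hy1), hlog]
  simp only [id]
  field_simp
  ring

theorem Li2_sq {x : ℝ} (hx : |x| < 1) : Li2 (x ^ 2) = 2 * Li2 x + 2 * Li2 (-x) := by
  set F : ℝ → ℝ := fun x => Li2 (x ^ 2) - 2 * Li2 x - 2 * Li2 (-x)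
  suffices F x = F 0 by simp [F] at this; linarith
  refine isOpen_Ioo.is_const_of_hasDerivAt_zero isPreconnected_Ioo (fun y hy => ?_)
    (abs_lt.1 hx) (by norm_num : (0 : ℝ) ∈ Ioo (-1) 1)
  obtain ⟨hy₁, hy₂⟩ := hy
  have hF := (((hasDerivAt_Li2_s9 (by nlinarith : y ^ 2 < 1)).comp (h := fun x => x ^ 2) y
    (hasDerivAt_pow 2 y)).sub
    ((hasDerivAt_Li2_s9 hy₂).const_mul 2)).sub
    (((hasDerivAt_Li2_s9 (by linarith : -y < 1)).comp y (hasDerivAt_neg y)).const_mul 2)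
  refine hF.congr_deriv ?_
  rcases eq_or_ne y 0 with rfl | hy0
  · simp
  have hlog : log (1 - y ^ 2) = log (1 - y) + log (1 + y) := by
    rw [← log_mul (by linarith) (by linarith)]; ring_nf
  rw [li2Integrand_of_ne_zero hy0, li2Integrand_of_ne_zero (pow_ne_zero 2 hy0),
    li2Integrand_of_ne_zero (neg_ne_zero.2 hy0), hlog, sub_neg_eq_add]
  field_simp
  ring

theorem intervalIntegrable_li2Integrand : IntervalIntegrable li2Integrand volume 0 1 := by
  have h₁ : IntervalIntegrable li2Integrand volume 0 (1 / 2) :=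
    (continuousOn_li2Integrand.mono fun t ht => by
      rw [uIcc_of_le (by norm_num)] at ht; exact ht.2.trans_lt (by norm_num)).intervalIntegrable
  have hlog : IntervalIntegrable (fun t => log (1 - t)) volume (1 / 2) 1 := by
    have := (intervalIntegral.intervalIntegrable_log' (a := 1 / 2) (b := 0)).comp_sub_left 1
    norm_num at this ⊢
    exact this
  have h₂ : IntervalIntegrable li2Integrand volume (1 / 2) 1 := by
    refine ((hlog.mul_continuousOn (continuousOn_inv₀.mono fun t ht => ?_)).neg).congr ?_
    · rw [uIcc_of_le (by norm_num)] at ht; exact (lt_of_lt_of_le (by norm_num) ht.1).ne'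
    · intro t ht
      rw [uIoc_of_le (by norm_num)] at ht
      rw [li2Integrand_of_ne_zero (lt_trans (by norm_num) ht.1).ne', neg_div, div_eq_mul_inv]
      rfl
  exact h₁.trans h₂

theorem tendsto_Li2_one_sub : Tendsto (fun x => Li2 (1 - x)) (𝓝[>] 0) (𝓝 (Li2 1)) := by
  have hcont : ContinuousWithinAt Li2 (Icc 0 1) 1 := by
    rw [funext Li2_eq_integral_li2Integrand]
    simpa using intervalIntegral.continuousOn_primitive_interval'
      intervalIntegrable_li2Integrand left_mem_uIcc 1 (by simp)
  refine hcont.tendsto.comp (tendsto_nhdsWithin_of_tendsto_nhds_of_eventually_within _ ?_ ?_)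
  · exact ((continuous_sub_left (1 : ℝ)).tendsto' 0 1 (sub_zero 1)).mono_left nhdsWithin_le_nhds
  · filter_upwards [Ioo_mem_nhdsGT (by norm_num : (0 : ℝ) < 1)] with x hx
    exact ⟨by linarith [hx.2], by linarith [hx.1]⟩

theorem hasSum_li2Integrand {t : ℝ} (ht₀ : t ≠ 0) (ht : |t| < 1) :
    HasSum (fun n : ℕ => t ^ n / (n + 1)) (li2Integrand t) := by
  rw [li2Integrand_of_ne_zero ht₀]
  have h := (hasSum_pow_div_log_of_abs_lt_one ht).div_const t
  rwa [show (fun n : ℕ => t ^ (n + 1) / (n + 1) / t) = fun n : ℕ => t ^ n / (n + 1) by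
    funext n; rw [pow_succ]; field_simp] at h

theorem hasSum_one_div_nat_add_one_sq : HasSum (fun n : ℕ => 1 / ((n : ℝ) + 1) ^ 2) (π ^ 2 / 6) := by
  simpa using (hasSum_nat_add_iff' 1).2 hasSum_zeta_two

theorem integral_pow_div_nat_add_one (n : ℕ) :
    ∫ t in Ioo (0 : ℝ) 1, t ^ n / (n + 1) = 1 / ((n : ℝ) + 1) ^ 2 := by
  rw [← integral_Ioc_eq_integral_Ioo, ← intervalIntegral.integral_of_le zero_le_one,
    intervalIntegral.integral_div, integral_pow]
  field_simp
  simp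

theorem Li2_one : Li2 1 = π ^ 2 / 6 := by
  have hint (n : ℕ) : Integrable (fun t : ℝ => t ^ n / (n + 1)) (volume.restrict (Ioo 0 1)) :=
    (by fun_prop : Continuous fun t : ℝ => t ^ n / (n + 1)).integrableOn_Icc.mono_set
      Ioo_subset_Icc_self
  have hnorm (n : ℕ) : ∫ t in Ioo (0 : ℝ) 1, ‖t ^ n / (n + 1)‖ = 1 / ((n : ℝ) + 1) ^ 2 := by
    rw [← integral_pow_div_nat_add_one]
    refine setIntegral_congr_fun measurableSet_Ioo fun t ht => ?_
    have := ht.1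
    simp only [Real.norm_eq_abs, abs_of_nonneg (by positivity : 0 ≤ t ^ n / (n + 1))]
  have hsum := hasSum_integral_of_summable_integral_norm hint
    (by simpa only [hnorm] using hasSum_one_div_nat_add_one_sq.summable)
  simp only [integral_pow_div_nat_add_one] at hsum
  rw [hasSum_one_div_nat_add_one_sq.unique hsum, Li2_eq_integral_li2Integrand,
    intervalIntegral.integral_of_le zero_le_one, integral_Ioc_eq_integral_Ioo]
  refine setIntegral_congr_fun measurableSet_Ioo fun t ht => ?_
  exact ((hasSum_li2Integrand ht.1.ne' (by rw [abs_of_pos ht.1]; exact ht.2)).tsum_eq).symm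

theorem tendsto_log_mul_log_one_sub : Tendsto (fun x => log x * log (1 - x)) (𝓝[>] 0) (𝓝 0) := by
  have hmul : Tendsto (fun x => x * log x) (𝓝[>] 0) (𝓝 0) := by
    simpa using (continuous_mul_log.tendsto 0).mono_left nhdsWithin_le_nhds
  have hg : Tendsto li2Integrand (𝓝[>] 0) (𝓝 (li2Integrand 0)) :=
    (continuousOn_li2Integrand.continuousAt (Iio_mem_nhds one_pos)).tendsto.mono_left
      nhdsWithin_le_nhds
  refine Tendsto.congr' ?_ (by simpa using (hmul.mul hg).neg)
  filter_upwards [self_mem_nhdsWithin] with x (hx : 0 < x)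
  rw [li2Integrand_of_ne_zero hx.ne']
  field_simp

theorem Li2_add_Li2_one_sub {x : ℝ} (hx₀ : 0 < x) (hx₁ : x < 1) :
    Li2 x + Li2 (1 - x) + log x * log (1 - x) = π ^ 2 / 6 := by
  set F : ℝ → ℝ := fun x => Li2 x + Li2 (1 - x) + log x * log (1 - x)
  have hconst : ∀ y ∈ Ioo (0 : ℝ) 1, F y = F x := fun y hy =>
    isOpen_Ioo.is_const_of_hasDerivAt_zero isPreconnected_Ioo (fun z ⟨hz₀, hz₁⟩ => by
      have hF := ((hasDerivAt_Li2_s9 hz₁).add ((hasDerivAt_Li2_s9 (by linarith : 1 - z < 1)).comp z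
        ((hasDerivAt_id z).const_sub 1))).add
        ((hasDerivAt_log hz₀.ne').mul (((hasDerivAt_id z).const_sub 1).log (sub_pos.2 hz₁).ne'))
      refine hF.congr_deriv ?_
      rw [li2Integrand_of_ne_zero hz₀.ne', li2Integrand_of_ne_zero (by linarith : 1 - z ≠ 0)]
      simp only [id, sub_sub_cancel]
      field_simp
      ring) hy ⟨hx₀, hx₁⟩
  have hlim : Tendsto F (𝓝[>] 0) (𝓝 (π ^ 2 / 6)) := by
    have hLi2 : Tendsto Li2 (𝓝[>] 0) (𝓝 0) := by
      simpa using (hasDerivAt_Li2_s9 one_pos).continuousAt.tendsto.mono_left nhdsWithin_le_nhds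
    simpa [Li2_one] using (hLi2.add tendsto_Li2_one_sub).add tendsto_log_mul_log_one_sub
  refine tendsto_nhds_unique (tendsto_const_nhds.congr' ?_) hlim
  filter_upwards [Ioo_mem_nhdsGT one_pos] with y hy using (hconst y hy).symm

theorem Li2_one_half : Li2 (1 / 2) = π ^ 2 / 12 - log 2 ^ 2 / 2 := by
  have h := Li2_add_Li2_one_sub (x := 1 / 2) (by norm_num) (by norm_num)
  rw [show (1 : ℝ) - 1 / 2 = 1 / 2 by norm_num, one_div, log_inv] at h
  rw [one_div]
  linear_combination h / 2

theorem rogersL_hexagon :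
    6 * rogersL (1 / 3) + 3 * rogersL (1 / 4) = π ^ 2 / 2 := by
  have hlanden := Li2_add_Li2_div_sub_one (x := 1 / 3) (by norm_num)
  have hdup := Li2_sq (x := 1 / 2) (by norm_num [abs_of_pos])
  have hlog4 : log 4 = 2 * log 2 := by
    rw [show (4 : ℝ) = 2 ^ 2 by norm_num, log_pow]; push_cast; ring
  have hlogs : log |1 / 3| = -log 3 ∧ log (1 - 1 / 3) = log 2 - log 3 ∧
      log |1 / 4| = -log 4 ∧ log (1 - 1 / 4) = log 3 - log 4 := by
    norm_num [abs_of_pos, log_div]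
  rw [hlogs.2.1, show (1 : ℝ) / 3 / (1 / 3 - 1) = -(1 / 2) by norm_num] at hlanden
  rw [show ((1 : ℝ) / 2) ^ 2 = 1 / 4 by norm_num] at hdup
  rw [rogersL, rogersL, hlogs.1, hlogs.2.1, hlogs.2.2.1, hlogs.2.2.2, hlog4]
  linear_combination 6 * hlanden + 3 * hdup + 6 * Li2_one_half
end
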